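/- arXiv:2507.21437 — 2 statements merged into one kernel-verified Lean document; each statement's English description precedes it below -/
import Mathlib

section
/- Fix x ∈ (0,1] and real α, β. Let u_ε denote the exact solution of ε u'' + u' + u = 0 with u(0) = α, u(1) = β (given by the explicit formula with λ₁, λ₂ as above). Then u_ε(x) → β·e^{1-x} as ε → 0⁺. -/
/-!
The solution is a combination of `exp (λ₁ x)` and `exp (λ₂ x)`. As `ε → 0⁺` the slow root `λ₁`,
which is half the difference quotient of `√(1 - 4ε)` at `0`, tends to `-1`, while the fast root
`λ₂ = -1/ε - λ₁` tends to `-∞`. Hence for `x > 0` every term carrying `exp λ₂` or `exp (λ₂ x)`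
vanishes, leaving `β exp (λ₁ x) / exp λ₁ → β exp (1 - x)`.
-/

open Real Filter Set Topology

noncomputable section

namespace SingularPerturbation

def slowRoot (ε : ℝ) : ℝ := (-1 + √(1 - 4 * ε)) / (2 * ε)

def fastRoot (ε : ℝ) : ℝ := (-1 - √(1 - 4 * ε)) / (2 * ε)

/-- The solution of a second-order linear ODE with characteristic roots `a ≠ b` taking the
values `α` at `0` and `β` at `1`. -/
def twoPointSolution (α β a b x : ℝ) : ℝ :=
  (-α * exp b + β) / (exp a - exp b) * exp (a * x) +
    (α * exp a - β) / (exp a - exp b) * exp (b * x)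

theorem slowRoot_eq_slope (ε : ℝ) :
    slowRoot ε = slope (fun ε => √(1 - 4 * ε)) 0 ε / 2 := by
  simp only [slowRoot, slope_def_field, mul_zero, sub_zero, sqrt_one]
  ring

theorem fastRoot_add_slowRoot (ε : ℝ) : fastRoot ε + slowRoot ε = -ε⁻¹ := by
  simp only [fastRoot, slowRoot]
  rcases eq_or_ne ε 0 with rfl | hε
  · simp
  · field_simp
    ring

theorem tendsto_slowRoot : Tendsto slowRoot (𝓝[≠] 0) (𝓝 (-1)) := by
  have hderiv : HasDerivAt (fun ε => √(1 - 4 * ε)) (-2) 0 := by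
    have h := ((hasDerivAt_id (0 : ℝ)).const_mul 4).const_sub 1 |>.sqrt (by norm_num)
    norm_num at h
    exact h
  rw [funext slowRoot_eq_slope, show (-1 : ℝ) = -2 / 2 by norm_num]
  exact (hasDerivAt_iff_tendsto_slope.mp hderiv).div_const 2

theorem tendsto_fastRoot : Tendsto fastRoot (𝓝[>] 0) atBot := by
  have hneg_inv : Tendsto (fun ε : ℝ => -ε⁻¹) (𝓝[>] 0) atBot :=
    tendsto_neg_atTop_atBot.comp tendsto_inv_nhdsGT_zero
  have hslow : Tendsto slowRoot (𝓝[>] 0) (𝓝 (-1)) :=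
    tendsto_slowRoot.mono_left (nhdsWithin_mono _ fun _ hε => ne_of_gt hε)
  convert hneg_inv.atBot_add hslow.neg using 2 with ε
  linarith [fastRoot_add_slowRoot ε]

theorem tendsto_twoPointSolution {ι : Type*} {l : Filter ι} {a b : ι → ℝ} {a₀ : ℝ}
    (α β : ℝ) {x : ℝ} (hx : 0 < x) (ha : Tendsto a l (𝓝 a₀)) (hb : Tendsto b l atBot) :
    Tendsto (fun i => twoPointSolution α β (a i) (b i) x) l (𝓝 (β * exp (a₀ * (x - 1)))) := by
  have hea : Tendsto (fun i => exp (a i)) l (𝓝 (exp a₀)) := (continuous_exp.tendsto _).comp ha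
  have heb : Tendsto (fun i => exp (b i)) l (𝓝 0) := tendsto_exp_atBot.comp hb
  have heax : Tendsto (fun i => exp (a i * x)) l (𝓝 (exp (a₀ * x))) :=
    (continuous_exp.tendsto _).comp (ha.mul_const x)
  have hebx : Tendsto (fun i => exp (b i * x)) l (𝓝 0) :=
    tendsto_exp_atBot.comp (hb.atBot_mul_const hx)
  have hden : exp a₀ - 0 ≠ 0 := by simp
  have hA : Tendsto (fun i => (-α * exp (b i) + β) / (exp (a i) - exp (b i))) l
      (𝓝 ((-α * 0 + β) / (exp a₀ - 0))) :=
    ((tendsto_const_nhds.mul heb).add tendsto_const_nhds).div (hea.sub heb) hden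
  have hB : Tendsto (fun i => (α * exp (a i) - β) / (exp (a i) - exp (b i))) l
      (𝓝 ((α * exp a₀ - β) / (exp a₀ - 0))) :=
    ((tendsto_const_nhds.mul hea).sub tendsto_const_nhds).div (hea.sub heb) hden
  have hlim : (-α * 0 + β) / (exp a₀ - 0) * exp (a₀ * x) + (α * exp a₀ - β) / (exp a₀ - 0) * 0 =
      β * exp (a₀ * (x - 1)) := by
    rw [mul_sub, exp_sub, mul_one]
    field_simp
    ring
  exact hlim ▸ (hA.mul heax).add (hB.mul hebx)

end SingularPerturbation

open SingularPerturbation in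
theorem stmt_3 (α β x : ℝ) (hx : x ∈ Set.Ioc (0 : ℝ) 1)
    (u : ℝ → ℝ → ℝ)
    (hu : ∀ ε x, u ε x =
      ((-α * Real.exp ((-1 - Real.sqrt (1 - 4 * ε)) / (2 * ε)) + β) /
        (Real.exp ((-1 + Real.sqrt (1 - 4 * ε)) / (2 * ε)) -
          Real.exp ((-1 - Real.sqrt (1 - 4 * ε)) / (2 * ε)))) *
        Real.exp (((-1 + Real.sqrt (1 - 4 * ε)) / (2 * ε)) * x)
      + ((α * Real.exp ((-1 + Real.sqrt (1 - 4 * ε)) / (2 * ε)) - β) /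
        (Real.exp ((-1 + Real.sqrt (1 - 4 * ε)) / (2 * ε)) -
          Real.exp ((-1 - Real.sqrt (1 - 4 * ε)) / (2 * ε)))) *
        Real.exp (((-1 - Real.sqrt (1 - 4 * ε)) / (2 * ε)) * x)) :
    Filter.Tendsto (fun ε : ℝ => u ε x)
      (nhdsWithin 0 (Set.Ioo 0 (1/4))) (nhds (β * Real.exp (1 - x))) := by
  have hslow : Tendsto slowRoot (𝓝[Ioo 0 (1/4)] 0) (𝓝 (-1)) :=
    tendsto_slowRoot.mono_left (nhdsWithin_mono _ fun _ hε => ne_of_gt hε.1)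
  have hfast : Tendsto fastRoot (𝓝[Ioo 0 (1/4)] 0) atBot :=
    tendsto_fastRoot.mono_left (nhdsWithin_mono _ Ioo_subset_Ioi_self)
  have h := tendsto_twoPointSolution α β hx.1 hslow hfast
  rw [show -1 * (x - 1) = 1 - x by ring] at h
  exact h.congr fun ε => (hu ε x).symm
end
end

section
/- Fix real α, β, and let u_ε be the exact solution of the constant-coefficient problem ε u'' + u' + u = 0, u(0) = α, u(1) = β. Then for the composite approximation u_c(x) = βe^{1-x} + (α - βe)e^{-x/ε}, the pointwise error satisfies u_ε(x) - u_c(x) → 0 as ε → 0⁺, for every fixed x ∈ [0,1]. -/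
/-!
For the roots λ₁ = slowRoot ε and λ₂ = fastRoot ε of ε λ² + λ + 1 = 0, as ε → 0⁺ we have
λ₁ = -2 / (1 + √(1 - 4ε)) → -1, while λ₂ ≤ -1/(2ε) → -∞. Hence e^{λ₂} → 0, so the coefficients of
u_ε tend to βe and α - βe, and e^{λ₁x} → e^{-x}. Both e^{λ₂x} and e^{-x/ε} tend to the same
limit (1 if x = 0, 0 if x > 0), so u_ε(x) and u_c(x) have the same limit.
-/

open Filter Real Set Topology

noncomputable section

def slowRoot (ε : ℝ) : ℝ := (-1 + √(1 - 4 * ε)) / (2 * ε)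

def fastRoot (ε : ℝ) : ℝ := (-1 - √(1 - 4 * ε)) / (2 * ε)

end

lemma slowRoot_eq {ε : ℝ} (hε : ε ∈ Ioo (0 : ℝ) (1 / 4)) :
    slowRoot ε = -2 / (√(1 - 4 * ε) + 1) := by
  obtain ⟨hε0, hε4⟩ := hε
  have hsq : √(1 - 4 * ε) ^ 2 = 1 - 4 * ε := sq_sqrt (by linarith)
  have hpos : 0 < √(1 - 4 * ε) + 1 := by positivity
  rw [slowRoot, div_eq_div_iff (by positivity) hpos.ne']
  nlinarith

lemma tendsto_slowRoot : Tendsto slowRoot (𝓝[>] 0) (𝓝 (-1)) := by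
  have hsqrt : Tendsto (fun ε : ℝ => √(1 - 4 * ε)) (𝓝[>] 0) (𝓝 1) := by
    have h : Continuous fun ε : ℝ => √(1 - 4 * ε) := by fun_prop
    simpa using (h.tendsto 0).mono_left nhdsWithin_le_nhds
  have hlim : Tendsto (fun ε : ℝ => -2 / (√(1 - 4 * ε) + 1)) (𝓝[>] 0) (𝓝 (-1)) := by
    rw [show (-1 : ℝ) = -2 / (1 + 1) by norm_num]
    exact tendsto_const_nhds.div (hsqrt.add_const 1) (by norm_num)
  refine hlim.congr' ?_
  filter_upwards [Ioo_mem_nhdsGT (by norm_num : (0 : ℝ) < 1 / 4)] with ε hε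
  exact (slowRoot_eq hε).symm

lemma fastRoot_le_neg_inv {ε : ℝ} (hε : 0 < ε) : fastRoot ε ≤ -(2 : ℝ)⁻¹ * ε⁻¹ := by
  have hs : 0 ≤ √(1 - 4 * ε) := sqrt_nonneg _
  rw [fastRoot, div_le_iff₀ (by positivity)]
  field_simp
  linarith

lemma tendsto_fastRoot : Tendsto fastRoot (𝓝[>] 0) atBot := by
  refine tendsto_atBot_mono' _ ?_
    (tendsto_inv_nhdsGT_zero.const_mul_atTop_of_neg (by norm_num : -(2 : ℝ)⁻¹ < 0))
  filter_upwards [self_mem_nhdsWithin] with ε hε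
  exact fastRoot_le_neg_inv hε

lemma tendsto_exp_mul_of_tendsto_atBot {ι : Type*} {l : Filter ι} {g : ι → ℝ}
    (hg : Tendsto g l atBot) {x : ℝ} (hx : 0 ≤ x) :
    Tendsto (fun i => exp (g i * x)) l (𝓝 (if x = 0 then 1 else 0)) := by
  rcases hx.eq_or_lt with rfl | hx
  · simpa using tendsto_const_nhds
  · simpa [hx.ne'] using hg.atBot_mul_const hx

lemma tendsto_solution_coeffs {ι : Type*} {l : Filter ι} {e₁ e₂ : ι → ℝ} {c : ℝ} (α β : ℝ)
    (hc : c ≠ 0) (h₁ : Tendsto e₁ l (𝓝 c)) (h₂ : Tendsto e₂ l (𝓝 0)) :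
    Tendsto (fun i => (-α * e₂ i + β) / (e₁ i - e₂ i)) l (𝓝 (β / c)) ∧
      Tendsto (fun i => (α * e₁ i - β) / (e₁ i - e₂ i)) l (𝓝 (α - β / c)) := by
  have hc' : c - 0 ≠ 0 := by simpa using hc
  constructor
  · rw [show β / c = (-α * 0 + β) / (c - 0) by simp]
    exact ((h₂.const_mul (-α)).add_const β).div (h₁.sub h₂) hc'
  · rw [show α - β / c = (α * c - β) / (c - 0) by rw [sub_zero]; field_simp]
    exact ((h₁.const_mul α).sub_const β).div (h₁.sub h₂) hc'

theorem stmt_9 (α β x : ℝ) (hx : x ∈ Set.Icc (0 : ℝ) 1)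
    (u : ℝ → ℝ → ℝ)
    (hu : ∀ ε x, u ε x =
      ((-α * Real.exp ((-1 - Real.sqrt (1 - 4 * ε)) / (2 * ε)) + β) /
        (Real.exp ((-1 + Real.sqrt (1 - 4 * ε)) / (2 * ε)) -
          Real.exp ((-1 - Real.sqrt (1 - 4 * ε)) / (2 * ε)))) *
        Real.exp (((-1 + Real.sqrt (1 - 4 * ε)) / (2 * ε)) * x)
      + ((α * Real.exp ((-1 + Real.sqrt (1 - 4 * ε)) / (2 * ε)) - β) /
        (Real.exp ((-1 + Real.sqrt (1 - 4 * ε)) / (2 * ε)) -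
          Real.exp ((-1 - Real.sqrt (1 - 4 * ε)) / (2 * ε)))) *
        Real.exp (((-1 - Real.sqrt (1 - 4 * ε)) / (2 * ε)) * x))
    (uc : ℝ → ℝ → ℝ)
    (huc : ∀ ε x, uc ε x = β * Real.exp (1 - x) + (α - β * Real.exp 1) * Real.exp (-x / ε)) :
    Filter.Tendsto (fun ε : ℝ => u ε x - uc ε x)
      (nhdsWithin 0 (Set.Ioo 0 (1/4))) (nhds 0) := by
  obtain ⟨hA, hB⟩ := tendsto_solution_coeffs α β (exp_pos (-1)).ne'
    ((continuous_exp.tendsto _).comp tendsto_slowRoot) (tendsto_exp_atBot.comp tendsto_fastRoot)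
  have hslow : Tendsto (fun ε => exp (slowRoot ε * x)) (𝓝[>] 0) (𝓝 (exp (-1 * x))) :=
    (continuous_exp.tendsto _).comp (tendsto_slowRoot.mul_const x)
  have hfast := tendsto_exp_mul_of_tendsto_atBot tendsto_fastRoot hx.1
  -- the boundary layer `exp (-x / ε)`, as `exp (-ε⁻¹ * x)`
  have hlayer := tendsto_exp_mul_of_tendsto_atBot
    (tendsto_inv_nhdsGT_zero.const_mul_atTop_of_neg (by norm_num : (-1 : ℝ) < 0)) hx.1
  have hlim := ((hA.mul hslow).add (hB.mul hfast)).sub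
    ((tendsto_const_nhds (x := β * exp (1 - x))).add (hlayer.const_mul (α - β * exp 1)))
  have hvalue : β / exp (-1) * exp (-1 * x) + (α - β / exp (-1)) * (if x = 0 then 1 else 0) -
      (β * exp (1 - x) + (α - β * exp 1) * (if x = 0 then 1 else 0)) = 0 := by
    rw [div_eq_mul_inv, ← exp_neg, neg_neg, show 1 - x = 1 + -1 * x by ring, exp_add]
    ring
  rw [hvalue] at hlim
  refine (hlim.mono_left (nhdsWithin_mono _ Ioo_subset_Ioi_self)).congr fun ε => ?_
  rw [hu, huc, show -x / ε = -1 * ε⁻¹ * x by ring]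
  rfl
end
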